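/- arXiv:2603.04618 — 4 statements merged into one kernel-verified Lean document; each statement's English description precedes it below -/
import Mathlib

section
/- (Theorem 1, finite temperature.) Let L be a set of density matrices on ℂ^d, let Y be a d×d positive semidefinite matrix such that Re Tr[Yσ] ≤ 1 for every σ ∈ L, and let ρ be a density matrix with R := Re Tr[Yρ] − 1 > 0. Fix β > 0 and λ > 0 with λ·β·R ≥ S(ρ). Let H = λ·Y, let τ = τ_H^β be the thermal state, and for a density matrix χ define the extractable work W(χ) = F_H(χ) − F_H(τ). Then for every σ ∈ L, (λ + β⁻¹·S(τ)) · W(ρ) ≥ (λ·(1+R) + β⁻¹·(S(τ) − S(ρ))) · W(σ). (Equivalently, the work-extraction advantage satisfies W(ρ)/W(σ) ≥ 1 + (R − λ⁻¹β⁻¹S(ρ))/(1 + λ⁻¹β⁻¹S(τ)).) -/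
/-!
With `W₀ = λ (1 - Re Tr[Yτ]) + β⁻¹ S(τ)`, the witness bound and `S(σ) ≥ 0` give `W(σ) ≤ W₀`, and the
entropy condition gives `W(ρ) ≥ W₀`. Writing `W(ρ) = W₀ + e` and `W(σ) = W₀ - f` with `e, f ≥ 0`,
the difference of the two sides is `(λ + β⁻¹ S(τ)) f + e (f + λ Re Tr[Yτ])`, which is nonnegative
because `S(τ) ≥ 0` and `Re Tr[Yτ] ≥ 0`: the thermal state is a density matrix, the exponential of a
Hermitian matrix being positive definite.
-/

open Matrix ComplexOrder

/-- A density matrix: positive semidefinite with unit trace. -/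
def IsDensityMatrix {n : Type*} [Fintype n] (ρ : Matrix n n ℂ) : Prop :=
  ρ.PosSemidef ∧ ρ.trace = 1

/-- The von Neumann entropy `S(ρ) = -∑ᵢ λᵢ log λᵢ` of a Hermitian matrix,
computed from its eigenvalues (junk value `0` for non-Hermitian matrices). -/
noncomputable def vnEntropy {n : Type*} [Fintype n] [DecidableEq n]
    (ρ : Matrix n n ℂ) : ℝ :=
  if h : ρ.IsHermitian then ∑ i, -(h.eigenvalues i * Real.log (h.eigenvalues i)) else 0

/-- The thermal (Gibbs) state `exp(-βH)/Tr[exp(-βH)]`. -/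
noncomputable def thermalState {n : Type*} [Fintype n] [DecidableEq n]
    (β : ℝ) (H : Matrix n n ℂ) : Matrix n n ℂ :=
  ((NormedSpace.exp (-(β : ℂ) • H)).trace)⁻¹ • NormedSpace.exp (-(β : ℂ) • H)

/-- The free energy `F_H(ρ) = Re Tr[Hρ] - β⁻¹ S(ρ)`. -/
noncomputable def freeEnergy {n : Type*} [Fintype n] [DecidableEq n]
    (β : ℝ) (H ρ : Matrix n n ℂ) : ℝ :=
  ((H * ρ).trace).re - β⁻¹ * vnEntropy ρ

variable {n : Type*} [Fintype n]

lemma Matrix.PosSemidef.trace_mul_nonneg {𝕜 : Type*} [RCLike 𝕜] {A B : Matrix n n 𝕜}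
    (hA : A.PosSemidef) (hB : B.PosSemidef) : 0 ≤ (A * B).trace := by
  classical
  open scoped MatrixOrder in
  obtain ⟨C, rfl⟩ := CStarAlgebra.nonneg_iff_eq_star_mul_self.mp hA.nonneg
  rw [star_eq_conjTranspose, Matrix.mul_assoc, trace_mul_comm, Matrix.mul_assoc]
  simpa only [Matrix.mul_assoc] using (hB.mul_mul_conjTranspose_same C).trace_nonneg

lemma Matrix.IsHermitian.posDef_exp {𝕜 : Type*} [RCLike 𝕜] [DecidableEq n] {A : Matrix n n 𝕜}
    (hA : A.IsHermitian) : (NormedSpace.exp A).PosDef := by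
  set B := NormedSpace.exp ((2⁻¹ : 𝕜) • A)
  have hsquare : NormedSpace.exp A = Bᴴ * B := by
    rw [← exp_conjTranspose, conjTranspose_smul, hA.eq, star_inv₀, star_ofNat,
      ← exp_add_of_commute _ _ ((Commute.refl A).smul_left _ |>.smul_right _), ← add_smul]
    norm_num
  rw [PosSemidef.posDef_iff_isUnit (hsquare ▸ posSemidef_conjTranspose_mul_self B)]
  exact isUnit_exp A

lemma IsDensityMatrix.nonempty {ρ : Matrix n n ℂ} (hρ : IsDensityMatrix ρ) : Nonempty n := by
  by_contra h
  have : IsEmpty n := not_nonempty_iff.mp h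
  simpa [trace] using hρ.2

lemma IsDensityMatrix.vnEntropy_nonneg [DecidableEq n] {ρ : Matrix n n ℂ}
    (hρ : IsDensityMatrix ρ) : 0 ≤ vnEntropy ρ := by
  obtain ⟨hpsd, htr⟩ := hρ
  have hsum : ∑ i, hpsd.1.eigenvalues i = 1 := by
    apply RCLike.ofReal_injective (K := ℂ)
    rw [RCLike.ofReal_sum, ← hpsd.1.trace_eq_sum_eigenvalues, htr, RCLike.ofReal_one]
  rw [vnEntropy, dif_pos hpsd.1]
  refine Finset.sum_nonneg fun i _ => ?_
  have hle : hpsd.1.eigenvalues i ≤ 1 := hsum ▸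
    Finset.single_le_sum (fun j _ => hpsd.eigenvalues_nonneg j) (Finset.mem_univ i)
  simpa only [Real.negMulLog, neg_mul] using Real.negMulLog_nonneg (hpsd.eigenvalues_nonneg i) hle

lemma isDensityMatrix_thermalState [DecidableEq n] [Nonempty n] {H : Matrix n n ℂ}
    (hH : H.IsHermitian) (β : ℝ) : IsDensityMatrix (thermalState β H) := by
  have hE : (NormedSpace.exp (-(β : ℂ) • H)).PosDef :=
    (hH.smul (by simp [IsSelfAdjoint])).posDef_exp
  have hZ : 0 < (NormedSpace.exp (-(β : ℂ) • H)).trace := hE.trace_pos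
  exact ⟨(hE.smul (RCLike.inv_pos_of_pos hZ)).posSemidef,
    by rw [thermalState, trace_smul, smul_eq_mul, inv_mul_cancel₀ hZ.ne']⟩

lemma re_trace_ofReal_smul_mul (c : ℝ) (A B : Matrix n n ℂ) :
    (((c : ℂ) • A * B).trace).re = c * (A * B).trace.re := by
  rw [smul_mul, trace_smul, smul_eq_mul, Complex.re_ofReal_mul]

lemma work_advantage_of_bounds {β lam aρ aσ aτ Sρ Sσ Sτ : ℝ} (hβ : 0 < β) (hlam : 0 ≤ lam)
    (hSσ : 0 ≤ Sσ) (hSτ : 0 ≤ Sτ) (haσ : aσ ≤ 1) (haτ : 0 ≤ aτ)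
    (hcond : Sρ ≤ lam * β * (aρ - 1)) :
    (lam + β⁻¹ * Sτ) * ((lam * aρ - β⁻¹ * Sρ) - (lam * aτ - β⁻¹ * Sτ)) ≥
      (lam * aρ + β⁻¹ * (Sτ - Sρ)) * ((lam * aσ - β⁻¹ * Sσ) - (lam * aτ - β⁻¹ * Sτ)) := by
  set b := β⁻¹
  have hb : 0 ≤ b := inv_nonneg.mpr hβ.le
  have hslackρ : 0 ≤ lam * (aρ - 1) - b * Sρ :=
    sub_nonneg.mpr <| (inv_mul_le_iff₀ hβ).mpr (by linarith)
  have hslackσ : 0 ≤ lam * (1 - aσ) + b * Sσ :=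
    add_nonneg (mul_nonneg hlam (sub_nonneg.mpr haσ)) (mul_nonneg hb hSσ)
  have hdiff : (lam + b * Sτ) * ((lam * aρ - b * Sρ) - (lam * aτ - b * Sτ)) -
      (lam * aρ + b * (Sτ - Sρ)) * ((lam * aσ - b * Sσ) - (lam * aτ - b * Sτ)) =
      (lam + b * Sτ) * (lam * (1 - aσ) + b * Sσ) +
        (lam * (aρ - 1) - b * Sρ) * (lam * (1 - aσ) + b * Sσ + lam * aτ) := by
    ring
  rw [ge_iff_le, ← sub_nonneg, hdiff]
  exact add_nonneg (mul_nonneg (add_nonneg hlam (mul_nonneg hb hSτ)) hslackσ)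
    (mul_nonneg hslackρ (add_nonneg hslackσ (mul_nonneg hlam haτ)))

theorem work_advantage_finite_temperature_general {d : ℕ}
    (L : Set (Matrix (Fin d) (Fin d) ℂ)) (hL : ∀ σ ∈ L, IsDensityMatrix σ)
    (Y ρ : Matrix (Fin d) (Fin d) ℂ)
    (hY : Y.PosSemidef)
    (hWitness : ∀ σ ∈ L, ((Y * σ).trace).re ≤ 1)
    (hρ : IsDensityMatrix ρ)
    (β lam : ℝ) (hβ : 0 < β) (hlam : 0 < lam)
    (hcond : vnEntropy ρ ≤ lam * β * (((Y * ρ).trace).re - 1)) :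
    ∀ σ ∈ L,
      (lam + β⁻¹ * vnEntropy (thermalState β ((lam : ℂ) • Y))) *
          (freeEnergy β ((lam : ℂ) • Y) ρ - freeEnergy β ((lam : ℂ) • Y) (thermalState β ((lam : ℂ) • Y))) ≥
        (lam * (1 + (((Y * ρ).trace).re - 1)) +
            β⁻¹ * (vnEntropy (thermalState β ((lam : ℂ) • Y)) - vnEntropy ρ)) *
          (freeEnergy β ((lam : ℂ) • Y) σ - freeEnergy β ((lam : ℂ) • Y) (thermalState β ((lam : ℂ) • Y))) := by
  intro σ hσ
  have : Nonempty (Fin d) := hρ.nonempty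
  have hH : ((lam : ℂ) • Y).PosSemidef := hY.smul (Complex.zero_le_real.mpr hlam.le)
  have hτ := isDensityMatrix_thermalState hH.1 β
  have hYτ : 0 ≤ (Y * thermalState β ((lam : ℂ) • Y)).trace.re :=
    (Complex.nonneg_iff.mp (hY.trace_mul_nonneg hτ.1)).1
  simp only [freeEnergy, re_trace_ofReal_smul_mul, add_sub_cancel]
  exact work_advantage_of_bounds hβ hlam.le (hL σ hσ).vnEntropy_nonneg hτ.vnEntropy_nonneg
    (hWitness σ hσ) hYτ hcond

/-- Theorem 1, finite temperature: with witness Hamiltonian `H = λY`, the work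
extractable from the resource state `ρ` exceeds that of any free state `σ` by at
least the factor `1 + (R − λ⁻¹β⁻¹S(ρ))/(1 + λ⁻¹β⁻¹S(τ))`, stated in a
cross-multiplied form. -/
theorem work_advantage_finite_temperature {d : ℕ}
    (L : Set (Matrix (Fin d) (Fin d) ℂ)) (hL : ∀ σ ∈ L, IsDensityMatrix σ)
    (Y ρ : Matrix (Fin d) (Fin d) ℂ)
    (hY : Y.PosSemidef)
    (hWitness : ∀ σ ∈ L, ((Y * σ).trace).re ≤ 1)
    (hρ : IsDensityMatrix ρ)
    (hR : 0 < ((Y * ρ).trace).re - 1)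
    (β lam : ℝ) (hβ : 0 < β) (hlam : 0 < lam)
    (hcond : vnEntropy ρ ≤ lam * β * (((Y * ρ).trace).re - 1)) :
    ∀ σ ∈ L,
      (lam + β⁻¹ * vnEntropy (thermalState β ((lam : ℂ) • Y))) *
          (freeEnergy β ((lam : ℂ) • Y) ρ - freeEnergy β ((lam : ℂ) • Y) (thermalState β ((lam : ℂ) • Y))) ≥
        (lam * (1 + (((Y * ρ).trace).re - 1)) +
            β⁻¹ * (vnEntropy (thermalState β ((lam : ℂ) • Y)) - vnEntropy ρ)) *
          (freeEnergy β ((lam : ℂ) • Y) σ - freeEnergy β ((lam : ℂ) • Y) (thermalState β ((lam : ℂ) • Y))) :=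
  work_advantage_finite_temperature_general L hL Y ρ hY hWitness hρ β lam hβ hlam hcond
end

section
/- (Core inequality of Theorem 2.) Let d ≥ 2, let y ∈ ℂ^d be a unit vector, let a ≥ 0, and set τ = (I − (1 − e^{−a}) · y y†) / (d − 1 + e^{−a}) (the thermal state of a rank-one Hamiltonian). Then for every d×d positive semidefinite matrix Z with Re Tr[Z] ≤ d (i.e., any robustness witness compatible with the maximally mixed state being free), Re Tr[Z τ] − 1 ≤ 1/(d − 1). -/
/-! Since `Tr[Z (y y†)] = y† Z y ≥ 0` and `e^{-a} ≤ 1`, dropping the rank-one term gives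
`Re Tr[Z τ] ≤ Re Tr Z / (d - 1 + e^{-a}) ≤ d / (d - 1) = 1 + 1 / (d - 1)`. -/

open Matrix ComplexOrder

lemma Matrix.trace_mul_vecMulVec {n R : Type*} [Fintype n] [CommSemiring R]
    (Z : Matrix n n R) (x y : n → R) :
    (Z * vecMulVec x y).trace = y ⬝ᵥ Z *ᵥ x := by
  rw [mul_vecMulVec, trace_vecMulVec, dotProduct_comm]

lemma Matrix.re_trace_mul_smul_one_sub_smul_vecMulVec {n : Type*} [Fintype n] [DecidableEq n]
    (Z : Matrix n n ℂ) (y : n → ℂ) (c r : ℝ) :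
    (Z * ((c : ℂ)⁻¹ • (1 - (r : ℂ) • vecMulVec y (star y)))).trace.re =
      (Z.trace.re - r * (star y ⬝ᵥ Z *ᵥ y).re) / c := by
  rw [Matrix.mul_smul, trace_smul, Matrix.mul_sub, Matrix.mul_one, Matrix.mul_smul, trace_sub,
    trace_smul, trace_mul_vecMulVec, ← Complex.ofReal_inv, smul_eq_mul, smul_eq_mul,
    Complex.re_ofReal_mul, Complex.sub_re, Complex.re_ofReal_mul, div_eq_inv_mul]

theorem thermal_state_witness_bound_general {d : ℕ} (hd : 2 ≤ d)
    (y : Fin d → ℂ) (a : ℝ) (ha : 0 ≤ a)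
    (Z : Matrix (Fin d) (Fin d) ℂ) (hZ : Z.PosSemidef)
    (hZtr : (Z.trace).re ≤ d) :
    ((Z * ((((d : ℂ) - 1 + (Real.exp (-a) : ℝ))⁻¹) •
        (1 - ((1 - Real.exp (-a) : ℝ) : ℂ) • vecMulVec y (star y)))).trace).re - 1 ≤
      1 / (d - 1) := by
  set s := Real.exp (-a)
  have hs0 : 0 < s := Real.exp_pos _
  have hs1 : s ≤ 1 := Real.exp_le_one_iff.mpr (neg_nonpos.mpr ha)
  have hd1 : (0 : ℝ) < d - 1 := by
    have : (2 : ℝ) ≤ d := by exact_mod_cast hd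
    linarith
  have hq : 0 ≤ (star y ⬝ᵥ Z *ᵥ y).re := hZ.re_dotProduct_nonneg y
  have hcast : (d : ℂ) - 1 + (s : ℂ) = ((d - 1 + s : ℝ) : ℂ) := by push_cast; rfl
  rw [hcast, re_trace_mul_smul_one_sub_smul_vecMulVec]
  calc (Z.trace.re - (1 - s) * (star y ⬝ᵥ Z *ᵥ y).re) / (d - 1 + s) - 1
      ≤ d / (d - 1 + s) - 1 := by
        gcongr
        exact (sub_le_self _ (mul_nonneg (sub_nonneg.mpr hs1) hq)).trans hZtr
    _ ≤ d / (d - 1) - 1 := by gcongr; linarith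
    _ = 1 / (d - 1) := by field_simp; ring

/-- Core inequality of Theorem 2: for the thermal state `τ` of a rank-one
Hamiltonian and any positive semidefinite witness `Z` with `Re Tr[Z] ≤ d`
(feasibility when the maximally mixed state is free), the witness value on `τ`
is at most `1/(d−1)` above `1`. -/
theorem thermal_state_witness_bound {d : ℕ} (hd : 2 ≤ d)
    (y : Fin d → ℂ) (hy : ∑ j, ‖y j‖ ^ 2 = 1) (a : ℝ) (ha : 0 ≤ a)
    (Z : Matrix (Fin d) (Fin d) ℂ) (hZ : Z.PosSemidef)
    (hZtr : (Z.trace).re ≤ d) :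
    ((Z * ((((d : ℂ) - 1 + (Real.exp (-a) : ℝ))⁻¹) •
        (1 - ((1 - Real.exp (-a) : ℝ) : ℂ) • vecMulVec y (star y)))).trace).re - 1 ≤
      1 / (d - 1) :=
  thermal_state_witness_bound_general hd y a ha Z hZ hZtr
end

section
/- (Theorem 2: near-total resource depletion after optimal work extraction.) Let d ≥ 2, let y ∈ ℂ^d be a unit vector, let a ≥ 0, and set τ = (I − (1 − e^{−a}) · y y†) / (d − 1 + e^{−a}) (the thermal state of a rank-one Hamiltonian). Let L' be any set of density matrices on ℂ^d that contains the maximally mixed state I/d. Then the generalized robustness satisfies R_{L'}(τ) ≤ 1/(d − 1). -/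
open Matrix ComplexOrder

/-- The generalized robustness of `ρ` with respect to the free set `L`. -/
noncomputable def robustness {n : Type*} [Fintype n]
    (L : Set (Matrix n n ℂ)) (ρ : Matrix n n ℂ) : ℝ :=
  sInf { s : ℝ | 0 ≤ s ∧ ∃ γ : Matrix n n ℂ, IsDensityMatrix γ ∧
    (1 + s)⁻¹ • (ρ + s • γ) ∈ L }

/-!
If `σ` is free and `ρ ≤ (1+s)σ`, then `γ = ((1+s)σ - ρ)/s` is a state with `(ρ + sγ)/(1+s) = σ`,
so the robustness of `ρ` is at most `s`. For `σ = I/d` and `s = 1/(d-1)` the condition reads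
`τ ≤ I/(d-1)`, which holds because the largest eigenvalue of `τ` is `1/(d-1+e^{-a}) ≤ 1/(d-1)`.
-/

theorem robustness_le_of_posSemidef_sub {n : Type*} [Fintype n] {L : Set (Matrix n n ℂ)}
    {ρ σ : Matrix n n ℂ} (hσ : σ ∈ L) (hσ_trace : σ.trace = 1) (hρ_trace : ρ.trace = 1)
    {s : ℝ} (hs : 0 < s) (hle : ((1 + s) • σ - ρ).PosSemidef) : robustness L ρ ≤ s := by
  set γ := s⁻¹ • ((1 + s) • σ - ρ)
  have hγ : IsDensityMatrix γ := by
    refine ⟨hle.smul (inv_nonneg.mpr hs.le), ?_⟩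
    rw [trace_smul, trace_sub, trace_smul, hσ_trace, hρ_trace, add_smul, one_smul,
      add_sub_cancel_left, smul_smul, inv_mul_cancel₀ hs.ne', one_smul]
  have hmix : (1 + s)⁻¹ • (ρ + s • γ) = σ := by
    rw [smul_smul, mul_inv_cancel₀ hs.ne', one_smul, add_sub_cancel, smul_smul,
      inv_mul_cancel₀ (by positivity), one_smul]
  exact csInf_le ⟨0, fun _ h => h.1⟩ ⟨hs.le, γ, hγ, hmix ▸ hσ⟩

theorem trace_vecMulVec_self_star {n : Type*} [Fintype n] (y : n → ℂ) :
    (vecMulVec y (star y)).trace = ((∑ j, ‖y j‖ ^ 2 : ℝ) : ℂ) := by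
  simp [dotProduct, Complex.mul_conj, Complex.normSq_eq_norm_sq]

noncomputable def rankOneThermalState {d : ℕ} (y : Fin d → ℂ) (a : ℝ) : Matrix (Fin d) (Fin d) ℂ :=
  (((d : ℂ) - 1 + (Real.exp (-a) : ℝ))⁻¹) •
    (1 - ((1 - Real.exp (-a) : ℝ) : ℂ) • vecMulVec y (star y))

theorem rankOneThermalState_eq {d : ℕ} (y : Fin d → ℂ) (a : ℝ) :
    rankOneThermalState y a = ((d : ℝ) - 1 + Real.exp (-a))⁻¹ •
      (1 - (1 - Real.exp (-a)) • vecMulVec y (star y)) := by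
  have hc : ((d : ℂ) - 1 + (Real.exp (-a) : ℝ))⁻¹ = (((d : ℝ) - 1 + Real.exp (-a))⁻¹ : ℝ) := by
    norm_cast
  rw [rankOneThermalState, hc, Complex.coe_smul, Complex.coe_smul]

theorem trace_rankOneThermalState {d : ℕ} {y : Fin d → ℂ} (hy : ∑ j, ‖y j‖ ^ 2 = 1) (a : ℝ) :
    (rankOneThermalState y a).trace = 1 := by
  have hc : (0 : ℝ) < d - 1 + Real.exp (-a) := by
    have hd : (1 : ℝ) ≤ d := by
      rw [Nat.one_le_cast, Nat.one_le_iff_ne_zero]; rintro rfl; simp at hy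
    linarith [Real.exp_pos (-a)]
  rw [rankOneThermalState_eq, trace_smul, trace_sub, trace_smul, trace_one, Fintype.card_fin,
    trace_vecMulVec_self_star, hy, Complex.real_smul, Complex.real_smul]
  generalize Real.exp (-a) = e at hc ⊢
  have hc' : (d : ℂ) - 1 + e ≠ 0 := by exact_mod_cast hc.ne'
  push_cast
  field_simp
  ring

theorem posSemidef_inv_smul_one_sub_rankOneThermalState {d : ℕ} (hd : 2 ≤ d) (y : Fin d → ℂ)
    {a : ℝ} (ha : 0 ≤ a) : (((d : ℝ) - 1)⁻¹ • 1 - rankOneThermalState y a).PosSemidef := by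
  have hd' : (0 : ℝ) < d - 1 := by
    rw [sub_pos, Nat.one_lt_cast]; exact hd
  have he0 : 0 < Real.exp (-a) := Real.exp_pos (-a)
  have he1 : Real.exp (-a) ≤ 1 := Real.exp_le_one_iff.mpr (by linarith)
  rw [rankOneThermalState_eq]
  generalize Real.exp (-a) = e at he0 he1 ⊢
  have hdecomp : ((d : ℝ) - 1)⁻¹ • (1 : Matrix (Fin d) (Fin d) ℂ) -
      ((d : ℝ) - 1 + e)⁻¹ • (1 - (1 - e) • vecMulVec y (star y)) =
      (((d : ℝ) - 1)⁻¹ - ((d : ℝ) - 1 + e)⁻¹) • 1 +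
        (((d : ℝ) - 1 + e)⁻¹ * (1 - e)) • vecMulVec y (star y) := by
    module
  rw [hdecomp]
  refine (PosSemidef.one.smul ?_).add ((posSemidef_vecMulVec_self_star y).smul ?_)
  · exact sub_nonneg.mpr (inv_anti₀ hd' (by linarith))
  · exact mul_nonneg (inv_nonneg.mpr (by linarith)) (by linarith)

theorem resource_depletion_after_work_extraction_general {d : ℕ} (hd : 2 ≤ d)
    (y : Fin d → ℂ) (hy : ∑ j, ‖y j‖ ^ 2 = 1) (a : ℝ) (ha : 0 ≤ a)
    (L' : Set (Matrix (Fin d) (Fin d) ℂ))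
    (hmm : ((d : ℂ))⁻¹ • (1 : Matrix (Fin d) (Fin d) ℂ) ∈ L') :
    robustness L'
        ((((d : ℂ) - 1 + (Real.exp (-a) : ℝ))⁻¹) •
          (1 - ((1 - Real.exp (-a) : ℝ) : ℂ) • vecMulVec y (star y))) ≤
      1 / (d - 1) := by
  change robustness L' (rankOneThermalState y a) ≤ 1 / (d - 1)
  have hd' : (0 : ℝ) < d - 1 := by
    rw [sub_pos, Nat.one_lt_cast]; exact hd
  have hd0 : (d : ℝ) ≠ 0 := by linarith
  have hmm_trace : ((d : ℂ)⁻¹ • (1 : Matrix (Fin d) (Fin d) ℂ)).trace = 1 := by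
    rw [trace_smul, trace_one, Fintype.card_fin, smul_eq_mul, inv_mul_cancel₀ (by exact_mod_cast hd0)]
  have hscale : (1 + 1 / ((d : ℝ) - 1)) • ((d : ℂ)⁻¹ • (1 : Matrix (Fin d) (Fin d) ℂ)) =
      ((d : ℝ) - 1)⁻¹ • 1 := by
    rw [← Complex.ofReal_natCast, ← Complex.ofReal_inv, Complex.coe_smul, smul_smul]
    congr 1
    field_simp [hd'.ne']
    ring
  refine robustness_le_of_posSemidef_sub hmm hmm_trace (trace_rankOneThermalState hy a)
    (one_div_pos.mpr hd') ?_
  rw [hscale]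
  exact posSemidef_inv_smul_one_sub_rankOneThermalState hd y ha

/-- Theorem 2: after optimal work extraction, the system ends in the thermal
state `τ` of a rank-one Hamiltonian, and with respect to any resource theory
whose free set `L'` contains the maximally mixed state, the remaining
robustness of `τ` is at most `1/(d−1)`. -/
theorem resource_depletion_after_work_extraction {d : ℕ} (hd : 2 ≤ d)
    (y : Fin d → ℂ) (hy : ∑ j, ‖y j‖ ^ 2 = 1) (a : ℝ) (ha : 0 ≤ a)
    (L' : Set (Matrix (Fin d) (Fin d) ℂ)) (hL' : ∀ σ ∈ L', IsDensityMatrix σ)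
    (hmm : ((d : ℂ))⁻¹ • (1 : Matrix (Fin d) (Fin d) ℂ) ∈ L') :
    robustness L'
        ((((d : ℂ) - 1 + (Real.exp (-a) : ℝ))⁻¹) •
          (1 - ((1 - Real.exp (-a) : ℝ) : ℂ) • vecMulVec y (star y))) ≤
      1 / (d - 1) :=
  resource_depletion_after_work_extraction_general hd y hy a ha L' hmm
end

section
/- (Robustness of coherence of maximally coherent states.) Let d ≥ 1, let θ : {1,…,d} → ℝ, and let ψ ∈ ℂ^d be the unit vector with components ψ_j = e^{i θ_j}/√d. Let L_incoh be the set of all diagonal density matrices on ℂ^d (the incoherent states in the computational basis). Then the generalized robustness of coherence of the pure state ψ ψ† satisfies R_{L_incoh}(ψ ψ†) = d − 1. -/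
open Matrix ComplexOrder

/-!
An incoherent state `σ` has `⟨ψ, σ ψ⟩ = tr σ / d = 1 / d`, because every `|ψ_i|²` equals `1 / d`.
On the other hand a mixture `(ρ + s γ) / (1 + s)` with `ρ = ψ ψ†` has overlap at least `1 / (1 + s)`
with `ψ`, so every feasible weight satisfies `1 + s ≥ d`. Conversely `1 - ρ` is a projection of
trace `d - 1`, and mixing `ρ` with the state `(1 - ρ) / (d - 1)` at weight `d - 1` gives the
maximally mixed state `1 / d`, which is incoherent.
-/

def incoherentStates (n : Type*) [Fintype n] : Set (Matrix n n ℂ) :=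
  { σ | IsDensityMatrix σ ∧ σ.IsDiag }

section

variable {n : Type*} [Fintype n]

def robustnessWeights (L : Set (Matrix n n ℂ)) (ρ : Matrix n n ℂ) : Set ℝ :=
  { s : ℝ | 0 ≤ s ∧ ∃ γ : Matrix n n ℂ, IsDensityMatrix γ ∧ (1 + s)⁻¹ • (ρ + s • γ) ∈ L }

theorem robustness_eq_of_isLeast {L : Set (Matrix n n ℂ)} {ρ : Matrix n n ℂ} {r : ℝ}
    (h : IsLeast (robustnessWeights L ρ) r) : robustness L ρ = r :=
  h.csInf_eq

def IsMaximallyCoherent (ψ : n → ℂ) : Prop :=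
  ∀ i, star (ψ i) * ψ i = (Fintype.card n : ℂ)⁻¹

theorem isDensityMatrix_vecMulVec_self_star {ψ : n → ℂ} (hψ : star ψ ⬝ᵥ ψ = 1) :
    IsDensityMatrix (vecMulVec ψ (star ψ)) :=
  ⟨posSemidef_vecMulVec_self_star ψ, by rw [trace_vecMulVec, dotProduct_comm, hψ]⟩

theorem isDensityMatrix_inv_card_smul_one [DecidableEq n] [Nonempty n] :
    IsDensityMatrix ((Fintype.card n : ℝ)⁻¹ • (1 : Matrix n n ℂ)) := by
  refine ⟨PosSemidef.one.smul (by positivity), ?_⟩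
  rw [trace_smul, trace_one, Complex.real_smul]
  push_cast
  exact inv_mul_cancel₀ (Nat.cast_ne_zero.2 Fintype.card_ne_zero)

theorem posSemidef_one_sub_vecMulVec_self_star [DecidableEq n] {ψ : n → ℂ}
    (hψ : star ψ ⬝ᵥ ψ = 1) : (1 - vecMulVec ψ (star ψ)).PosSemidef := by
  set P := 1 - vecMulVec ψ (star ψ)
  have hP : P.IsHermitian := isHermitian_one.sub (posSemidef_vecMulVec_self_star ψ).isHermitian
  have hPP : P * P = P := by
    simp only [P, sub_mul, mul_sub, one_mul, mul_one, vecMulVec_mul_vecMulVec, hψ, one_smul]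
    abel
  simpa only [hP.eq, hPP] using posSemidef_conjTranspose_mul_self P

theorem isDensityMatrix_smul_one_sub_vecMulVec_self_star [DecidableEq n] {ψ : n → ℂ}
    (hψ : star ψ ⬝ᵥ ψ = 1) (hn : 1 < Fintype.card n) :
    IsDensityMatrix (((Fintype.card n : ℝ) - 1)⁻¹ • (1 - vecMulVec ψ (star ψ))) := by
  have hn' : (1 : ℝ) < Fintype.card n := by exact_mod_cast hn
  refine ⟨(posSemidef_one_sub_vecMulVec_self_star hψ).smul (by simp; linarith), ?_⟩
  rw [trace_smul, trace_sub, trace_one, (isDensityMatrix_vecMulVec_self_star hψ).2,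
    Complex.real_smul]
  push_cast
  exact inv_mul_cancel₀ (by exact_mod_cast (sub_pos.2 hn').ne')

theorem inv_one_add_le_dotProduct_mulVec_smul_add {ψ : n → ℂ} (hψ : star ψ ⬝ᵥ ψ = 1) {s : ℝ}
    (hs : 0 ≤ s) {γ : Matrix n n ℂ} (hγ : γ.PosSemidef) :
    (((1 + s)⁻¹ : ℝ) : ℂ) ≤ star ψ ⬝ᵥ ((1 + s)⁻¹ • (vecMulVec ψ (star ψ) + s • γ)) *ᵥ ψ := by
  rw [smul_mulVec, add_mulVec, smul_mulVec, vecMulVec_mulVec, op_smul_eq_smul, hψ, one_smul,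
    dotProduct_smul, dotProduct_add, dotProduct_smul, hψ, Complex.real_smul]
  calc (((1 + s)⁻¹ : ℝ) : ℂ) = ((1 + s)⁻¹ : ℝ) * 1 := (mul_one _).symm
    _ ≤ _ := by
      gcongr
      exact le_add_of_nonneg_right (smul_nonneg hs (hγ.dotProduct_mulVec_nonneg ψ))

theorem dotProduct_mulVec_of_isDiag [DecidableEq n] {ψ : n → ℂ} {c : ℂ}
    (hψ : ∀ i, star (ψ i) * ψ i = c) {σ : Matrix n n ℂ} (hσ : σ.IsDiag) :
    star ψ ⬝ᵥ σ *ᵥ ψ = c * σ.trace := by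
  rw [← hσ.diagonal_diag]
  simp only [dotProduct, mulVec_diagonal, trace_diagonal, Finset.mul_sum, Pi.star_apply]
  exact Finset.sum_congr rfl fun i _ => by rw [← hψ i]; ring

theorem IsMaximallyCoherent.dotProduct_star_self [Nonempty n] {ψ : n → ℂ}
    (hψ : IsMaximallyCoherent ψ) : star ψ ⬝ᵥ ψ = 1 := by
  simp only [dotProduct, Pi.star_apply, hψ _, Finset.sum_const, Finset.card_univ, nsmul_eq_mul]
  exact mul_inv_cancel₀ (Nat.cast_ne_zero.2 Fintype.card_ne_zero)

theorem IsMaximallyCoherent.card_sub_one_le [DecidableEq n] [Nonempty n] {ψ : n → ℂ}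
    (hψ : IsMaximallyCoherent ψ) {s : ℝ}
    (hs : s ∈ robustnessWeights (incoherentStates n) (vecMulVec ψ (star ψ))) :
    (Fintype.card n : ℝ) - 1 ≤ s := by
  obtain ⟨hs, γ, ⟨hγ, -⟩, ⟨-, hσ⟩, hσdiag⟩ := hs
  have h := inv_one_add_le_dotProduct_mulVec_smul_add hψ.dotProduct_star_self hs hγ
  rw [dotProduct_mulVec_of_isDiag hψ hσdiag, hσ, mul_one,
    show ((Fintype.card n : ℂ))⁻¹ = (((Fintype.card n : ℝ)⁻¹ : ℝ) : ℂ) by push_cast; rfl,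
    Complex.real_le_real, inv_le_inv₀ (by positivity) (by positivity)] at h
  linarith

theorem IsMaximallyCoherent.card_sub_one_mem [DecidableEq n] [Nonempty n] {ψ : n → ℂ}
    (hψ : IsMaximallyCoherent ψ) :
    (Fintype.card n : ℝ) - 1 ∈ robustnessWeights (incoherentStates n) (vecMulVec ψ (star ψ)) := by
  obtain hn | hn := (Nat.one_le_iff_ne_zero.2 Fintype.card_ne_zero : 1 ≤ Fintype.card n).eq_or_lt
  · have : Subsingleton n := Fintype.card_le_one_iff_subsingleton.1 hn.ge
    have hρ := isDensityMatrix_vecMulVec_self_star hψ.dotProduct_star_self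
    refine ⟨by simp [← hn], _, hρ, ?_⟩
    rw [← hn]
    simpa using ⟨hρ, isDiag_of_subsingleton _⟩
  · have hn' : (1 : ℝ) < Fintype.card n := by exact_mod_cast hn
    refine ⟨by linarith, _, isDensityMatrix_smul_one_sub_vecMulVec_self_star
      hψ.dotProduct_star_self hn, ?_⟩
    rw [smul_smul, mul_inv_cancel₀ (by linarith), one_smul, add_sub_cancel, add_sub_cancel]
    exact ⟨isDensityMatrix_inv_card_smul_one, isDiag_one.smul _⟩

theorem IsMaximallyCoherent.robustness_incoherentStates [DecidableEq n] [Nonempty n]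
    {ψ : n → ℂ} (hψ : IsMaximallyCoherent ψ) :
    robustness (incoherentStates n) (vecMulVec ψ (star ψ)) = Fintype.card n - 1 :=
  robustness_eq_of_isLeast ⟨hψ.card_sub_one_mem, fun _ hs => hψ.card_sub_one_le hs⟩

end

theorem star_mul_self_exp_I_mul_div_sqrt (θ : ℝ) (d : ℕ) :
    star (Complex.exp (Complex.I * θ) / (Real.sqrt d : ℂ)) *
      (Complex.exp (Complex.I * θ) / (Real.sqrt d : ℂ)) = (d : ℂ)⁻¹ := by
  rw [Complex.star_def, Complex.conj_mul', norm_div, Complex.norm_exp_I_mul_ofReal,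
    Complex.norm_real, Real.norm_of_nonneg (Real.sqrt_nonneg _), ← Complex.ofReal_pow, div_pow,
    Real.sq_sqrt (Nat.cast_nonneg _), one_pow, one_div, Complex.ofReal_inv, Complex.ofReal_natCast]

/-- The robustness of coherence of a maximally coherent state
`ψ = (e^{iθ_1},…,e^{iθ_d})/√d`, relative to the set of diagonal (incoherent)
density matrices, equals `d − 1`. -/
theorem robustness_of_coherence_maximally_coherent {d : ℕ} (hd : 1 ≤ d)
    (θ : Fin d → ℝ) :
    robustness
        { σ : Matrix (Fin d) (Fin d) ℂ |
          IsDensityMatrix σ ∧ ∀ i j, i ≠ j → σ i j = 0 }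
        (vecMulVec (fun j => Complex.exp (Complex.I * (θ j : ℂ)) / (Real.sqrt d : ℂ))
          (star fun j => Complex.exp (Complex.I * (θ j : ℂ)) / (Real.sqrt d : ℂ))) =
      d - 1 := by
  have : NeZero d := ⟨by omega⟩
  have hψ : IsMaximallyCoherent fun j => Complex.exp (Complex.I * (θ j : ℂ)) / (Real.sqrt d : ℂ) :=
    fun j => by rw [Fintype.card_fin]; exact star_mul_self_exp_I_mul_div_sqrt (θ j) d
  have h := hψ.robustness_incoherentStates
  rwa [Fintype.card_fin] at h
end
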